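/- Let s ≥ 2 and z ∈ T = {x ≥ 2 : s ∤ x}. Then for all x ∈ T: e_{(z)}(1_{(x)}) = δ_z(1_{(x)}) − δ_{γ(z)}(1_{(x)}), i.e., [x = z] = 1_{(x)}(z) − 1_{(x)}(γ(z)), where 1_{(x)}(γ(z)) is interpreted as 0 when γ(z) ∉ T (indeed 1_{(x)}(w) = 0 for any w ∉ T when x ∈ T). -/

import Mathlib

open scoped Classical

/-- For `x ≥ 2` with `s^(n(x)-1) ≤ x < s^(n(x))` (so `n(x) - 1 = Nat.log s x`),
`γ(x) = x mod s^(n(x)-1)`. -/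
def gam (s x : ℕ) : ℕ := x % s ^ (Nat.log s x)


/-- For `x ∈ T`, `n(x) = Nat.log s x + 1` and `1_{(x)}(z) = 1` iff `s^(n(x)) ∣ z - x`. -/
noncomputable def indZ (s x : ℕ) (z : ℕ) : ℤ :=
  if ((s : ℤ)) ^ (Nat.log s x + 1) ∣ ((z : ℤ) - (x : ℤ)) then 1 else 0

/-!
`1_{(x)}` is the indicator of the residue class of `x` modulo `s^{n(x)}`, and `z ≡ γ(z)` modulo
`s^{n(z)-1}`. If `n(x) < n(z)`, then `x ≠ z` and `1_{(x)}` cannot tell `z` from `γ(z)`, so both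
sides vanish. If `n(z) ≤ n(x)`, then `z` and `γ(z) < s^{n(z)-1} ≤ x` both lie in `[0, s^{n(x)})`,
where the residue class of `x` is `{x}`; so `1_{(x)}(z) = [x = z]` and `1_{(x)}(γ(z)) = 0`.
A number `w ∉ T` is either below `2 ≤ x`, hence in `[0, s^{n(x)})`, or a multiple of `s`,
whereas the class of `x` consists of non-multiples of `s`.
-/

theorem indZ_eq_ite_modEq (s x w : ℕ) :
    indZ s x w = if x ≡ w [MOD s ^ (Nat.log s x + 1)] then 1 else 0 := by
  simp only [indZ, Nat.modEq_iff_dvd, Nat.cast_pow]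

theorem indZ_eq_of_modEq {s x w w' k : ℕ} (hk : Nat.log s x + 1 ≤ k) (h : w ≡ w' [MOD s ^ k]) :
    indZ s x w = indZ s x w' := by
  have h' : w ≡ w' [MOD s ^ (Nat.log s x + 1)] := h.of_dvd (pow_dvd_pow s hk)
  rw [indZ_eq_ite_modEq, indZ_eq_ite_modEq]
  exact if_congr ⟨fun hw => hw.trans h', fun hw' => hw'.trans h'.symm⟩ rfl rfl

theorem indZ_eq_ite_eq_of_lt {s x w : ℕ} (hs : 1 < s) (hw : w < s ^ (Nat.log s x + 1)) :
    indZ s x w = if x = w then 1 else 0 := by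
  have hx : x < s ^ (Nat.log s x + 1) := Nat.lt_pow_succ_log_self hs x
  rw [indZ_eq_ite_modEq]
  exact if_congr ⟨fun h => h.eq_of_lt_of_lt hx hw, fun h => h ▸ rfl⟩ rfl rfl

theorem indZ_eq_zero_of_dvd {s x w : ℕ} (hsx : ¬ s ∣ x) (hsw : s ∣ w) : indZ s x w = 0 := by
  rw [indZ_eq_ite_modEq, if_neg]
  exact fun h => hsx ((h.dvd_iff (dvd_pow_self s (Nat.succ_ne_zero _))).mpr hsw)

theorem modEq_gam {s z k : ℕ} (hk : k ≤ Nat.log s z) : z ≡ gam s z [MOD s ^ k] :=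
  ((Nat.mod_modEq z _).symm).of_dvd (pow_dvd_pow s hk)

theorem gam_lt {s : ℕ} (hs : 0 < s) (z : ℕ) : gam s z < s ^ Nat.log s z :=
  Nat.mod_lt z (pow_pos hs _)

theorem indZ_sub_indZ_gam_of_log_lt {s x z : ℕ} (hlog : Nat.log s x < Nat.log s z) :
    indZ s x z - indZ s x (gam s z) = 0 := by
  rw [indZ_eq_of_modEq hlog (modEq_gam le_rfl), sub_self]

theorem indZ_gam_eq_zero_of_log_le {s x z : ℕ} (hs : 1 < s) (hx : x ≠ 0)
    (hlog : Nat.log s z ≤ Nat.log s x) : indZ s x (gam s z) = 0 := by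
  have hgam : gam s z < x := calc
    gam s z < s ^ Nat.log s z := gam_lt (by omega) z
    _ ≤ s ^ Nat.log s x := Nat.pow_le_pow_right (by omega) hlog
    _ ≤ x := Nat.pow_log_le_self s hx
  rw [indZ_eq_ite_eq_of_lt hs (hgam.trans (Nat.lt_pow_succ_log_self hs x)), if_neg hgam.ne']

theorem indZ_eq_ite_eq_of_log_le {s x z : ℕ} (hs : 1 < s) (hlog : Nat.log s z ≤ Nat.log s x) :
    indZ s x z = if x = z then 1 else 0 :=
  indZ_eq_ite_eq_of_lt hs <| (Nat.lt_pow_succ_log_self hs z).trans_le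
    (Nat.pow_le_pow_right (by omega) (by omega))

theorem stmt12_general (s z x : ℕ) (hs : 2 ≤ s)
    (hx2 : 2 ≤ x) (hsx : ¬ s ∣ x) :
    ((if x = z then (1 : ℤ) else 0) = indZ s x z - indZ s x (gam s z)) ∧
    (∀ w : ℕ, ¬ (2 ≤ w ∧ ¬ s ∣ w) → indZ s x w = 0) := by
  refine ⟨?_, fun w hw => ?_⟩
  · rcases lt_or_ge (Nat.log s x) (Nat.log s z) with hlt | hle
    · have hxz : x ≠ z := fun h => hlt.ne (congrArg _ h)
      rw [if_neg hxz, indZ_sub_indZ_gam_of_log_lt hlt]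
    · rw [indZ_eq_ite_eq_of_log_le hs hle, indZ_gam_eq_zero_of_log_le hs (by omega) hle, sub_zero]
  · rcases not_and_or.mp hw with hw | hw
    · have hwx : w < x := by omega
      rw [indZ_eq_ite_eq_of_lt hs (hwx.trans (Nat.lt_pow_succ_log_self hs x)), if_neg hwx.ne']
    · exact indZ_eq_zero_of_dvd hsx (not_not.mp hw)

/-- For `z, x ∈ T`: `e_{(z)}(1_{(x)}) = δ_z(1_{(x)}) − δ_{γ(z)}(1_{(x)})`, i.e.
`[x = z] = 1_{(x)}(z) − 1_{(x)}(γ(z))`; moreover `1_{(x)}(w) = 0` for `w ∉ T`. -/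
theorem stmt12 (s z x : ℕ) (hs : 2 ≤ s) (hz2 : 2 ≤ z) (hsz : ¬ s ∣ z)
    (hx2 : 2 ≤ x) (hsx : ¬ s ∣ x) :
    ((if x = z then (1 : ℤ) else 0) = indZ s x z - indZ s x (gam s z)) ∧
    (∀ w : ℕ, ¬ (2 ≤ w ∧ ¬ s ∣ w) → indZ s x w = 0) :=
  stmt12_general s z x hs hx2 hsx
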